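/- arXiv:1801.09850 — 9 statements merged into one kernel-verified Lean document; each statement's English description precedes it below -/
import Mathlib

section
/- The principal solution x̄ is an optimal solution of the problem: minimize ‖b − A ⊠ x‖₁ subject to A ⊠ x ≤ b, over x ∈ ℝ_max^n. That is, for every x with A ⊠ x ≤ b, ‖b − A ⊠ x̄‖₁ ≤ ‖b − A ⊠ x‖₁. -/
open scoped Classical
open Finset

/-- Max-plus matrix-vector product: `(A ⊠ x) i = max_j (A i j + x j)`. -/
noncomputable def mpMul {m n : ℕ} (A : Fin m → Fin n → EReal) (x : Fin n → EReal) :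
    Fin m → EReal := fun i => ⨆ j, A i j + x j

/-- Principal solution `x̄ j = min_i (b i − A i j)`. -/
noncomputable def principal {m n : ℕ} (A : Fin m → Fin n → EReal) (b : Fin m → ℝ) :
    Fin n → EReal := fun j => ⨅ i, (b i : EReal) - A i j

/-- Every row and every column of `A` has a finite entry. -/
def DoublyAstic {m n : ℕ} (A : Fin m → Fin n → EReal) : Prop :=
  (∀ i, ∃ j, A i j ≠ ⊥) ∧ (∀ j, ∃ i, A i j ≠ ⊥)

/-- All entries lie in ℝ_max = ℝ ∪ {−∞}, i.e. are not +∞. -/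
def RmaxMat {m n : ℕ} (A : Fin m → Fin n → EReal) : Prop := ∀ i j, A i j ≠ ⊤

def RmaxVec {n : ℕ} (x : Fin n → EReal) : Prop := ∀ j, x j ≠ ⊤

/-- Support: indices of finite (non-bottom) components. -/
def supp {n : ℕ} (x : Fin n → EReal) : Set (Fin n) := {j | x j ≠ ⊥}

/-- ℓ₁ residual error `Σ_i (b i − (A ⊠ x) i)` (nonnegative under the lateness constraint). -/
noncomputable def err1 {m n : ℕ} (A : Fin m → Fin n → EReal) (b : Fin m → ℝ)
    (x : Fin n → EReal) : EReal := ∑ i, ((b i : EReal) - mpMul A x i)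

/-! The constraint `A ⊠ x ≤ b` is residuated: it holds exactly when `x ≤ x̄`, because in
`EReal` the inequality `a + t ≤ β` with `β` real is equivalent to `t ≤ β - a`, whatever `a` is.
Hence `x̄` is the greatest feasible point, and the residual `Σ (b - A ⊠ x)` is antitone in `x`. -/

section MaxPlus

variable {m n : ℕ} (A : Fin m → Fin n → EReal) (b : Fin m → ℝ)

theorem mpMul_le_iff_le_principal (x : Fin n → EReal) :
    (∀ i, mpMul A x i ≤ (b i : EReal)) ↔ x ≤ principal A b := by
  simp only [mpMul, principal, iSup_le_iff, Pi.le_def, le_iInf_iff,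
    EReal.le_sub_iff_add_le (Or.inr (EReal.coe_ne_bot _)) (Or.inr (EReal.coe_ne_top _)), add_comm]
  exact forall_comm

theorem mpMul_principal_le (i : Fin m) : mpMul A (principal A b) i ≤ (b i : EReal) :=
  (mpMul_le_iff_le_principal A b _).2 le_rfl i

theorem mpMul_mono : Monotone (mpMul A) := fun _ _ hxy _ =>
  iSup_mono fun j => add_le_add_right (hxy j) _

theorem err1_antitone : Antitone (err1 A b) := fun _ _ hxy =>
  Finset.sum_le_sum fun i _ => EReal.sub_le_sub le_rfl (mpMul_mono A hxy i)

end MaxPlus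

theorem stmt3_general {m n : ℕ} (A : Fin m → Fin n → EReal) (b : Fin m → ℝ) :
    (∀ i, mpMul A (principal A b) i ≤ (b i : EReal)) ∧
      ∀ x : Fin n → EReal, RmaxVec x → (∀ i, mpMul A x i ≤ (b i : EReal)) →
        err1 A b (principal A b) ≤ err1 A b x :=
  ⟨mpMul_principal_le A b, fun x _ hx =>
    err1_antitone A b ((mpMul_le_iff_le_principal A b x).1 hx)⟩

/-- the principal solution is optimal for minimizing the ℓ₁ residual under
the lateness constraint. -/
theorem stmt3 {m n : ℕ} (A : Fin m → Fin n → EReal) (b : Fin m → ℝ)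
    (hA : RmaxMat A) (hastic : DoublyAstic A) :
    (∀ i, mpMul A (principal A b) i ≤ (b i : EReal)) ∧
      ∀ x : Fin n → EReal, RmaxVec x → (∀ i, mpMul A x i ≤ (b i : EReal)) →
        err1 A b (principal A b) ≤ err1 A b x :=
  stmt3_general A b
end

section
/- Covering theorem: x ∈ ℝ_max^n is a solution of A ⊠ x = b if and only if (a) x ≤ x̄ and (b) ∪_{j ∈ J_x} I_j = {1,…,m}, where J_x = {j : x_j = x̄_j} and I_j = {i : b_i − A_{ij} = x̄_j}. -/
open scoped Classical
open Finset

/-!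
Residuation: `x ≤ x̄` holds iff `A ⊠ x ≤ b`. Given this, `A ⊠ x = b` says that in every row `i`
some term `A i j + x j` of the finite maximum reaches `b i`, i.e. `x j = b i - A i j`. As
`x j ≤ x̄ j ≤ b i - A i j`, this happens exactly when `j ∈ J_x` and `i ∈ I_j`.
-/

theorem iSup_eq_iff_of_finite {α ι : Type*} [CompleteLinearOrder α] [Finite ι] {f : ι → α}
    {c : α} (hc : c ≠ ⊥) : ⨆ i, f i = c ↔ (∀ i, f i ≤ c) ∧ ∃ i, f i = c := by
  refine ⟨fun h => ⟨fun i => h ▸ le_iSup f i, ?_⟩,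
    fun ⟨hle, i, hi⟩ => le_antisymm (iSup_le hle) (hi ▸ le_iSup f i)⟩
  cases isEmpty_or_nonempty ι
  · exact absurd (h.symm.trans (iSup_of_empty f)) hc
  · obtain ⟨i, hi⟩ := exists_eq_ciSup_of_finite (f := f)
    exact ⟨i, hi.trans h⟩

theorem eq_iff_eq_and_eq_of_le_of_le {α : Type*} [PartialOrder α] {a c d : α} (hac : a ≤ c)
    (hcd : c ≤ d) : a = d ↔ a = c ∧ d = c := by
  constructor
  · rintro rfl
    exact ⟨le_antisymm hac hcd, le_antisymm hac hcd⟩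
  · rintro ⟨rfl, rfl⟩
    rfl

theorem EReal.add_eq_coe_iff_eq_sub {a y : EReal} {r : ℝ} (ha : a ≠ ⊤) (hy : y ≠ ⊤) :
    a + y = r ↔ y = r - a := by
  induction a using EReal.rec with
  | bot => simp [hy]
  | coe a =>
    constructor
    · intro h
      rw [← h, EReal.add_sub_cancel_left]
    · rintro rfl
      rw [← add_sub_assoc, EReal.add_sub_cancel_left]
  | top => exact absurd rfl ha

section MaxPlus

variable {m n : ℕ} (A : Fin m → Fin n → EReal)

theorem mpMul_eq_coe_iff (x : Fin n → EReal) (i : Fin m) (r : ℝ) :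
    mpMul A x i = r ↔ mpMul A x i ≤ r ∧ ∃ j, A i j + x j = r := by
  rw [mpMul, iSup_eq_iff_of_finite (EReal.coe_ne_bot r), iSup_le_iff]

variable (b : Fin m → ℝ)

theorem principal_le_sub (i : Fin m) (j : Fin n) : principal A b j ≤ b i - A i j :=
  iInf_le _ i

theorem le_principal_iff_mpMul_le (x : Fin n → EReal) :
    (∀ j, x j ≤ principal A b j) ↔ ∀ i, mpMul A x i ≤ b i := by
  simp only [principal, mpMul, le_iInf_iff, iSup_le_iff]
  rw [forall_comm]
  refine forall_congr' fun i => forall_congr' fun j => ?_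
  rw [EReal.le_sub_iff_add_le (Or.inr (EReal.coe_ne_bot _)) (Or.inr (EReal.coe_ne_top _)),
    add_comm]

end MaxPlus

theorem stmt4_general {m n : ℕ} (A : Fin m → Fin n → EReal) (b : Fin m → ℝ)
    (hA : RmaxMat A)
    (x : Fin n → EReal) (hx : RmaxVec x) :
    (∀ i, mpMul A x i = (b i : EReal)) ↔
      ((∀ j, x j ≤ principal A b j) ∧
        (⋃ j ∈ {j : Fin n | x j = principal A b j},
          {i : Fin m | (b i : EReal) - A i j = principal A b j}) = Set.univ) := by
  simp only [mpMul_eq_coe_iff, forall_and, ← le_principal_iff_mpMul_le, Set.eq_univ_iff_forall,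
    Set.mem_iUnion, Set.mem_ofPred_eq, exists_prop]
  refine and_congr_right fun hle => forall_congr' fun i => exists_congr fun j => ?_
  rw [EReal.add_eq_coe_iff_eq_sub (hA i j) (hx j),
    eq_iff_eq_and_eq_of_le_of_le (hle j) (principal_le_sub A b i j)]

/-- covering theorem. `x` solves `A ⊠ x = b` iff `x ≤ x̄` and the sets
`I_j`, `j` in the agreement set, cover `{1,…,m}`. -/
theorem stmt4 {m n : ℕ} (A : Fin m → Fin n → EReal) (b : Fin m → ℝ)
    (hA : RmaxMat A) (hastic : DoublyAstic A)
    (x : Fin n → EReal) (hx : RmaxVec x) :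
    (∀ i, mpMul A x i = (b i : EReal)) ↔
      ((∀ j, x j ≤ principal A b j) ∧
        (⋃ j ∈ {j : Fin n | x j = principal A b j},
          {i : Fin m | (b i : EReal) - A i j = principal A b j}) = Set.univ) :=
  stmt4_general A b hA x hx
end

section
/- Given a set cover {I_j : j ∈ K}, K ⊆ {1,…,n}, of I = {1,…,m} (with I_j defined from A, b), the vector x(K) with x(K)_j = x̄_j for j ∈ K and x(K)_j = −∞ for j ∉ K is a solution of A ⊠ x = b. -/
open scoped Classical
open Finset

/-!
Since `A i j + x̄ j ≤ A i j + (b i - A i j) ≤ b i`, every vector below the principal solution `x̄`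
satisfies `A ⊠ x ≤ b`; in particular so does `x(K)`. Conversely, the cover gives for each row `i`
some `j ∈ K` with `x̄ j = b i - A i j`, and column `j` has a finite entry, so `x̄ j < ⊤`, which
forces `A i j` to be finite and hence `A i j + x̄ j = b i`.
-/

namespace EReal

lemma add_coe_sub_cancel {a : EReal} (ha_top : a ≠ ⊤) (ha_bot : a ≠ ⊥) (b : ℝ) :
    a + (b - a) = b := by
  lift a to ℝ using ⟨ha_top, ha_bot⟩
  rw [add_comm, EReal.sub_add_cancel]

lemma coe_sub_ne_top {a : EReal} (ha : a ≠ ⊥) (b : ℝ) : (b : EReal) - a ≠ ⊤ := by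
  induction a with
  | bot => exact absurd rfl ha
  | coe a => exact_mod_cast EReal.coe_ne_top (b - a)
  | top => simp

end EReal

section MaxPlus

variable {m n : ℕ} (A : Fin m → Fin n → EReal) (b : Fin m → ℝ)

lemma mpMul_le_of_le_principal {x : Fin n → EReal} (hx : ∀ j, x j ≤ principal A b j) (i : Fin m) :
    mpMul A x i ≤ b i :=
  iSup_le fun j => add_comm (x j) (A i j) ▸ EReal.add_le_of_le_sub ((hx j).trans (iInf_le _ i))

lemma principal_ne_top {j : Fin n} (hj : ∃ i, A i j ≠ ⊥) : principal A b j ≠ ⊤ := by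
  obtain ⟨i, hi⟩ := hj
  exact ne_top_of_le_ne_top (EReal.coe_sub_ne_top hi (b i)) (iInf_le _ i)

lemma add_principal_eq_of_attained {i : Fin m} {j : Fin n} (hA : A i j ≠ ⊤)
    (hj : ∃ i, A i j ≠ ⊥) (hattained : (b i : EReal) - A i j = principal A b j) :
    A i j + principal A b j = b i := by
  have hA_bot : A i j ≠ ⊥ := fun hbot =>
    principal_ne_top A b hj (by rw [← hattained, hbot, EReal.coe_sub_bot])
  rw [← hattained, EReal.add_coe_sub_cancel hA hA_bot]

end MaxPlus

theorem stmt5_general {m n : ℕ} (A : Fin m → Fin n → EReal) (b : Fin m → ℝ)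
    (hA : RmaxMat A) (hastic : DoublyAstic A)
    (K : Finset (Fin n))
    (hcov : ∀ i, ∃ j ∈ K, (b i : EReal) - A i j = principal A b j) :
    ∀ i, mpMul A (fun j => if j ∈ K then principal A b j else ⊥) i = (b i : EReal) := by
  intro i
  refine le_antisymm (mpMul_le_of_le_principal A b (fun j => ?_) i) ?_
  · split_ifs
    exacts [le_rfl, bot_le]
  · obtain ⟨j, hjK, hattained⟩ := hcov i
    calc (b i : EReal) = A i j + principal A b j :=
          (add_principal_eq_of_attained A b (hA i j) (hastic.2 j) hattained).symm
      _ ≤ mpMul A (fun j => if j ∈ K then principal A b j else ⊥) i :=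
          le_iSup_of_le j (by simp only [if_pos hjK, le_rfl])

/-- a set cover `{I_j : j ∈ K}` yields a solution `x(K)`. -/
theorem stmt5 {m n : ℕ} (A : Fin m → Fin n → EReal) (b : Fin m → ℝ)
    (hA : RmaxMat A) (hastic : DoublyAstic A)
    (hsol : ∃ x0 : Fin n → EReal, RmaxVec x0 ∧ ∀ i, mpMul A x0 i = (b i : EReal))
    (K : Finset (Fin n))
    (hcov : ∀ i, ∃ j ∈ K, (b i : EReal) - A i j = principal A b j) :
    ∀ i, mpMul A (fun j => if j ∈ K then principal A b j else ⊥) i = (b i : EReal) :=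
  stmt5_general A b hA hastic K hcov
end

section
/- Fix T ⊆ {1,…,n} and let z ∈ ℝ_max^n be defined by z_j = x̄_j for j ∈ T and z_j = −∞ for j ∉ T. Then z satisfies A ⊠ z ≤ b, and for every x ∈ ℝ_max^n with supp(x) = T and A ⊠ x ≤ b, we have ‖b − A ⊠ x‖₁ ≥ ‖b − A ⊠ z‖₁. -/
open scoped Classical
open Finset

/-! By residuation `x̄` is the greatest subsolution of `A ⊠ x ≤ b`, so every subsolution with
support `T` lies below `z`, the greatest vector with support in `T` that is below `x̄`.
Since `A ⊠ ·` is monotone, the residual `‖b − A ⊠ ·‖₁` is antitone, and `z` minimizes it. -/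

theorem mpMul_le_iff {m n : ℕ} (A : Fin m → Fin n → EReal) (x : Fin n → EReal) (i : Fin m)
    (c : EReal) : mpMul A x i ≤ c ↔ ∀ j, A i j + x j ≤ c :=
  iSup_le_iff

theorem mpMul_mono_s8 {m n : ℕ} (A : Fin m → Fin n → EReal) : Monotone (mpMul A) :=
  fun _ _ hxy _ => iSup_mono fun j => add_le_add_right (hxy j) _

theorem err1_anti {m n : ℕ} (A : Fin m → Fin n → EReal) (b : Fin m → ℝ) :
    Antitone (err1 A b) :=
  fun _ _ hxy => sum_le_sum fun i _ => EReal.sub_le_sub le_rfl (mpMul_mono_s8 A hxy i)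

theorem forall_mpMul_le_iff_le_principal {m n : ℕ} (A : Fin m → Fin n → EReal) (b : Fin m → ℝ)
    (x : Fin n → EReal) : (∀ i, mpMul A x i ≤ b i) ↔ x ≤ principal A b := by
  have hb : ∀ i j, x j ≤ (b i : EReal) - A i j ↔ A i j + x j ≤ b i := fun i j => by
    rw [EReal.le_sub_iff_add_le (Or.inr (EReal.coe_ne_bot _)) (Or.inr (EReal.coe_ne_top _)),
      add_comm]
  simp only [mpMul_le_iff, Pi.le_def, principal, le_iInf_iff, hb]
  exact forall_comm

theorem stmt8_general {m n : ℕ} (A : Fin m → Fin n → EReal) (b : Fin m → ℝ)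
    (T : Finset (Fin n)) :
    (∀ i, mpMul A (fun j => if j ∈ T then principal A b j else ⊥) i ≤ (b i : EReal)) ∧
      ∀ x : Fin n → EReal, RmaxVec x → supp x = ↑T →
        (∀ i, mpMul A x i ≤ (b i : EReal)) →
        err1 A b (fun j => if j ∈ T then principal A b j else ⊥) ≤ err1 A b x := by
  set z : Fin n → EReal := fun j => if j ∈ T then principal A b j else ⊥
  have hz : z ≤ principal A b := fun j => by
    simp only [z]
    split_ifs <;> simp
  refine ⟨(forall_mpMul_le_iff_le_principal A b z).2 hz, fun x _ hsupp hx => err1_anti A b ?_⟩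
  have hxb : x ≤ principal A b := (forall_mpMul_le_iff_le_principal A b x).1 hx
  intro j
  by_cases hj : j ∈ T
  · simpa [z, hj] using hxb j
  · have hxj : j ∉ supp x := by rwa [hsupp, mem_coe]
    simp [z, hj, show x j = ⊥ from not_not.1 hxj]

/-- for fixed support `T`, the vector agreeing with the principal solution on `T`
is feasible and has minimal ℓ₁ residual among feasible vectors with support `T`. -/
theorem stmt8 {m n : ℕ} (A : Fin m → Fin n → EReal) (b : Fin m → ℝ)
    (hA : RmaxMat A) (hastic : DoublyAstic A) (T : Finset (Fin n)) :
    (∀ i, mpMul A (fun j => if j ∈ T then principal A b j else ⊥) i ≤ (b i : EReal)) ∧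
      ∀ x : Fin n → EReal, RmaxVec x → supp x = ↑T →
        (∀ i, mpMul A x i ≤ (b i : EReal)) →
        err1 A b (fun j => if j ∈ T then principal A b j else ⊥) ≤ err1 A b x :=
  stmt8_general A b T
end

section
/- The ℓ₁-error set function E: 2^J → ℝ, E(T) = ‖e(T)‖₁ with e(T) as above, is supermodular: for all C ⊆ B ⊆ J and k ∈ J, E(C ∪ {k}) − E(C) ≤ E(B ∪ {k}) − E(B). -/
open scoped Classical
open Finset

/-- Real error vector for a finite matrix `A`:
`e(T) i = b i − max_{j∈T}(A i j + x̄ j)` for nonempty `T`, `e(∅) = max_j e({j})`. -/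
noncomputable def eVecR {m n : ℕ} (A : Fin m → Fin n → ℝ) (b : Fin m → ℝ)
    (T : Finset (Fin n)) : Fin m → ℝ :=
  fun i => if hT : T.Nonempty then b i - T.sup' hT (fun j => A i j + (⨅ t, (b t - A t j)))
           else ⨆ j, (b i - (A i j + (⨅ t, (b t - A t j))))

/-- ℓ₁-error set function `E(T) = Σ_i e_i(T)`. -/
noncomputable def ER {m n : ℕ} (A : Fin m → Fin n → ℝ) (b : Fin m → ℝ)
    (T : Finset (Fin n)) : ℝ := ∑ i, eVecR A b T i

/-!
Fix a row `i` and put `g j = e_i({j})`. Then `e_i(T ∪ {k}) = min (g k) (e_i(T))` for every `T`,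
including `T = ∅` because `e_i(∅) = max_j g j`. Hence `e_i` is antitone, and its marginal gain
`min (g k) x - x = min (g k - x) 0` at `x = e_i(T)` grows as `T` grows. Summing over `i` gives the
supermodularity of `E`.
-/

section Supermodular

variable {ι α : Type*} [DecidableEq ι] [LinearOrder α]

lemma min_sub_self_le_min_sub_self [AddCommGroup α] [IsOrderedAddMonoid α] {a x y : α}
    (hyx : y ≤ x) : min a x - x ≤ min a y - y := by
  rw [← min_sub_sub_right, ← min_sub_sub_right, sub_self, sub_self]
  gcongr

lemma Finset.antitone_of_insert_eq_min {φ : Finset ι → α} {g : ι → α}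
    (hφ : ∀ k T, φ (insert k T) = min (g k) (φ T)) : Antitone φ := by
  intro C B hCB
  suffices h : ∀ D, φ (D ∪ C) ≤ φ C by
    simpa [Finset.sdiff_union_of_subset hCB] using h (B \ C)
  intro D
  induction D using Finset.induction_on with
  | empty => simp
  | insert a D _ ih => rw [Finset.insert_union, hφ]; exact min_le_of_right_le ih

lemma Finset.supermodular_of_insert_eq_min [AddCommGroup α] [IsOrderedAddMonoid α]
    {φ : Finset ι → α} {g : ι → α} (hφ : ∀ k T, φ (insert k T) = min (g k) (φ T))
    {C B : Finset ι} (hCB : C ⊆ B) (k : ι) :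
    φ (insert k C) - φ C ≤ φ (insert k B) - φ B := by
  rw [hφ, hφ]
  exact min_sub_self_le_min_sub_self (Finset.antitone_of_insert_eq_min hφ hCB)

end Supermodular

section ErrorVector

variable {m n : ℕ} (A : Fin m → Fin n → ℝ) (b : Fin m → ℝ)

lemma eVecR_singleton (j : Fin n) (i : Fin m) :
    eVecR A b {j} i = b i - (A i j + ⨅ t, (b t - A t j)) := by
  simp [eVecR]

lemma eVecR_insert (k : Fin n) (T : Finset (Fin n)) (i : Fin m) :
    eVecR A b (insert k T) i = min (eVecR A b {k} i) (eVecR A b T i) := by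
  rcases T.eq_empty_or_nonempty with rfl | hT
  · have hle : eVecR A b {k} i ≤ eVecR A b ∅ i := by
      rw [eVecR_singleton]
      simp only [eVecR, Finset.not_nonempty_empty, dite_false]
      exact le_ciSup (f := fun j => b i - (A i j + ⨅ t, (b t - A t j)))
        (Set.finite_range _).bddAbove k
    simp [min_eq_left hle]
  · simp only [eVecR, dif_pos hT, dif_pos (Finset.insert_nonempty k T),
      dif_pos (Finset.singleton_nonempty k), Finset.sup'_insert hT, Finset.sup'_singleton,
      min_sub_sub_left]

end ErrorVector

theorem stmt11_general {m n : ℕ}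
    (A : Fin m → Fin n → ℝ) (b : Fin m → ℝ) :
    ∀ C B : Finset (Fin n), C ⊆ B → ∀ k : Fin n,
      ER A b (insert k C) - ER A b C ≤ ER A b (insert k B) - ER A b B := by
  intro C B hCB k
  simp only [ER, ← Finset.sum_sub_distrib]
  exact Finset.sum_le_sum fun i _ =>
    Finset.supermodular_of_insert_eq_min (φ := (eVecR A b · i))
      (fun k T => eVecR_insert A b k T i) hCB k

/-- the ℓ₁-error set function is supermodular. -/
theorem stmt11 {m n : ℕ} (hm : 0 < m) (hn : 0 < n)
    (A : Fin m → Fin n → ℝ) (b : Fin m → ℝ) :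
    ∀ C B : Finset (Fin n), C ⊆ B → ∀ k : Fin n,
      ER A b (insert k C) - ER A b C ≤ ER A b (insert k B) - ER A b B :=
  stmt11_general A b
end

section
/- If f : 2^J → ℝ is supermodular, then the truncated function f̄(T) = max(f(T), ε) is supermodular for any constant ε ∈ ℝ, provided f is also decreasing. -/
open scoped Classical
open Finset

/-!
With `a = f (C ∪ {k})`, `b = f C`, `c = f (B ∪ {k})`, `d = f B`, antitonicity makes `b` the
largest of the four values and supermodularity says `a + d ≤ c + b`. For a monotone convex `φ`
(such as `max · ε`) this gives `φ a + φ d ≤ φ c + φ b`. If `a` or `d` is below `c`, monotonicity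
alone suffices; otherwise raising `a` to `c + b - d` puts the pair in `[c, b]` with the same sum
as `c, b`, where convexity applies.
-/

section
open Set

theorem ConvexOn.map_add_map_reflect_le {φ : ℝ → ℝ} (hφ : ConvexOn ℝ univ φ) {b c x : ℝ}
    (hx : x ∈ Icc c b) : φ x + φ (c + b - x) ≤ φ c + φ b := by
  obtain rfl | hcb := hx.1.trans hx.2 |>.eq_or_lt
  · obtain rfl : x = c := le_antisymm hx.2 hx.1
    simp
  have hpos : 0 < b - c := sub_pos.2 hcb
  have key : ∀ μ ν : ℝ, 0 ≤ μ → 0 ≤ ν → μ + ν = b - c →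
      φ ((μ * c + ν * b) / (b - c)) ≤ (μ * φ c + ν * φ b) / (b - c) := by
    intro μ ν hμ hν hμν
    have := hφ.2 (mem_univ c) (mem_univ b) (div_nonneg hμ hpos.le) (div_nonneg hν hpos.le)
      (by rw [← add_div, hμν, div_self hpos.ne'])
    simpa only [smul_eq_mul, ← mul_div_right_comm, ← add_div] using this
  have h₁ := key (b - x) (x - c) (by linarith [hx.2]) (by linarith [hx.1]) (by ring)
  have h₂ := key (x - c) (b - x) (by linarith [hx.1]) (by linarith [hx.2]) (by ring)
  rw [show ((b - x) * c + (x - c) * b) / (b - c) = x by field_simp; ring] at h₁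
  rw [show ((x - c) * c + (b - x) * b) / (b - c) = c + b - x by field_simp; ring] at h₂
  have : ((b - x) * φ c + (x - c) * φ b) / (b - c) + ((x - c) * φ c + (b - x) * φ b) / (b - c)
      = φ c + φ b := by field_simp; ring
  linarith

theorem Monotone.map_add_map_le_of_add_le {φ : ℝ → ℝ} (hmono : Monotone φ)
    (hφ : ConvexOn ℝ univ φ) {b c x y : ℝ} (hxb : x ≤ b) (hyb : y ≤ b) (hxy : x + y ≤ c + b) :
    φ x + φ y ≤ φ c + φ b := by
  rcases le_total x c with hxc | hcx
  · linarith [hmono hxc, hmono hyb]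
  rcases le_total y c with hyc | hcy
  · linarith [hmono hyc, hmono hxb]
  have := hφ.map_add_map_reflect_le (x := y) ⟨hcy, hyb⟩
  linarith [hmono (show x ≤ c + b - y by linarith)]

end

def IsSupermodular {α : Type*} [DecidableEq α] (f : Finset α → ℝ) : Prop :=
  ∀ C B : Finset α, C ⊆ B → ∀ k : α, f (insert k C) - f C ≤ f (insert k B) - f B

theorem IsSupermodular.comp_antitone {α : Type*} [DecidableEq α] {f : Finset α → ℝ}
    (hf : IsSupermodular f) (hanti : Antitone f) {φ : ℝ → ℝ} (hmono : Monotone φ)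
    (hφ : ConvexOn ℝ Set.univ φ) : IsSupermodular (φ ∘ f) := by
  intro C B hCB k
  have := hmono.map_add_map_le_of_add_le hφ (hanti (subset_insert k C)) (hanti hCB)
    (c := f (insert k B)) (by linarith [hf C B hCB k])
  simp only [Function.comp_apply]
  linarith

/-- truncation `max(f(·), ε)` of a decreasing supermodular function is
supermodular. -/
theorem stmt13 {n : ℕ} (f : Finset (Fin n) → ℝ) (ε : ℝ)
    (hsup : ∀ C B : Finset (Fin n), C ⊆ B → ∀ k : Fin n,
      f (insert k C) - f C ≤ f (insert k B) - f B)
    (hdec : ∀ C B : Finset (Fin n), C ⊆ B → f B ≤ f C) :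
    ∀ C B : Finset (Fin n), C ⊆ B → ∀ k : Fin n,
      max (f (insert k C)) ε - max (f C) ε ≤ max (f (insert k B)) ε - max (f B) ε :=
  IsSupermodular.comp_antitone hsup hdec (monotone_id.max monotone_const)
    ((convexOn_id convex_univ).sup (convexOn_const ε convex_univ))
end

section
/- Sparse recovery: let z ∈ ℝ_max^n with (A, A ⊠ z) doubly ℝ-astic and b = A ⊠ z ∈ ℝ^m. Suppose for every j ∈ supp(z) there exists a row i = i(j) such that (a) A_{ij} + z_j > A_{ik} + z_k for all k ∈ supp(z), k ≠ j, and (b) for all l ∉ supp(z) there exists s with A_{sl} > A_{il} + b_s − b_i. Then every solution x of A ⊠ x = b satisfies x_j = z_j for all j ∈ supp(z), and the sparsest solution x* equals z. -/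
open scoped Classical
open Finset

/-! In a row `i` chosen for `j ∈ supp z` by condition (a), the maximum defining `b i = (A ⊠ z) i`
is attained only at `j`, so `A i j + z j = b i`; comparing with any solution `x` gives `x ≤ z` on
`supp z`. In that same row, the entries `k ∈ supp z \ {j}` of `A ⊠ x` stay below `b i` by (a) and
`x ≤ z`, and those `l ∉ supp z` by (b), since the row `s` caps `x l` at `b s - A s l`. Hence the
maximum for `x` in row `i` is attained at `j` as well, and `x j = z j`. A solution agreeing with `z`
on `supp z` has at least as large a support, so a sparsest one has the same support and equals `z`.
-/

namespace EReal

lemma exists_eq_of_iSup_eq_coe {ι : Type*} [Finite ι] {f : ι → EReal} {c : ℝ}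
    (h : ⨆ i, f i = c) : ∃ i, f i = c := by
  cases isEmpty_or_nonempty ι
  · rw [iSup_of_empty] at h
    exact absurd h (bot_ne_coe c)
  · obtain ⟨i, hi⟩ := exists_eq_ciSup_of_finite (f := f)
    exact ⟨i, hi.trans h⟩

lemma le_of_add_le_of_add_eq_coe {a x y : EReal} {c : ℝ} (hx : a + x ≤ c) (hy : a + y = c) :
    x ≤ y := by
  induction a using EReal.rec with
  | bot => simp at hy
  | top =>
    induction y using EReal.rec <;> simp at hy
  | coe a => exact addLECancellable_coe a (hy ▸ hx)

lemma add_lt_coe_of_add_coe_sub_lt {a c x : EReal} {d e : ℝ}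
    (hac : a + ((e - d : ℝ) : EReal) < c) (hcx : c + x ≤ e) (hx : x ≠ ⊤) : a + x < d := by
  induction x using EReal.rec with
  | bot => exact (add_bot a).symm ▸ bot_lt_coe d
  | top => exact absurd rfl hx
  | coe t =>
    induction c using EReal.rec with
    | bot => simp at hac
    | top => simp at hcx
    | coe c =>
      induction a using EReal.rec with
      | bot => exact (bot_add _).symm ▸ bot_lt_coe d
      | top => rw [top_add_coe] at hac; exact absurd hac not_top_lt
      | coe a =>
        norm_cast at hac hcx ⊢
        linarith

end EReal

section MaxPlus

variable {m n : ℕ} {A : Fin m → Fin n → EReal} {x z : Fin n → EReal} {i : Fin m} {j : Fin n}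

lemma add_le_mpMul (A : Fin m → Fin n → EReal) (x : Fin n → EReal) (i : Fin m) (j : Fin n) :
    A i j + x j ≤ mpMul A x i :=
  le_iSup (fun k => A i k + x k) j

lemma add_eq_of_mpMul_eq_coe {c : ℝ} (h : mpMul A x i = c) (hlt : ∀ k ≠ j, A i k + x k < c) :
    A i j + x j = c := by
  obtain ⟨k, hk⟩ := EReal.exists_eq_of_iSup_eq_coe h
  obtain rfl : k = j := by
    by_contra hkj
    exact (hlt k hkj).ne hk
  exact hk

lemma add_eq_of_mpMul_eq_coe_of_dominant {c : ℝ} (h : mpMul A z i = c)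
    (hdom : ∀ k ∈ supp z, k ≠ j → A i k + z k < A i j + z j) : A i j + z j = c := by
  refine add_eq_of_mpMul_eq_coe h fun k hkj => ?_
  by_cases hk : k ∈ supp z
  · exact (hdom k hk hkj).trans_le (h ▸ add_le_mpMul A z i j)
  · rw [show z k = ⊥ from not_not.mp hk, EReal.add_bot]
    exact EReal.bot_lt_coe c

lemma le_of_mpMul_le_of_dominant {c : ℝ} (hz : mpMul A z i = c) (hx : mpMul A x i ≤ c)
    (hdom : ∀ k ∈ supp z, k ≠ j → A i k + z k < A i j + z j) : x j ≤ z j :=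
  EReal.le_of_add_le_of_add_eq_coe ((add_le_mpMul A x i j).trans hx)
    (add_eq_of_mpMul_eq_coe_of_dominant hz hdom)

lemma eq_on_supp_of_dominant_of_separating {b : Fin m → ℝ} (hx : RmaxVec x)
    (hxb : ∀ i, mpMul A x i = b i) (hzb : ∀ i, mpMul A z i = b i)
    (hcond : ∀ j ∈ supp z, ∃ i : Fin m,
      (∀ k ∈ supp z, k ≠ j → A i k + z k < A i j + z j) ∧
      (∀ l, l ∉ supp z → ∃ s : Fin m, A i l + ((b s - b i : ℝ) : EReal) < A s l)) :
    ∀ j ∈ supp z, x j = z j := by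
  have hle : ∀ k ∈ supp z, x k ≤ z k := fun k hk => by
    obtain ⟨i, hdom, -⟩ := hcond k hk
    exact le_of_mpMul_le_of_dominant (hzb i) (hxb i).le hdom
  intro j hj
  obtain ⟨i, hdom, hsep⟩ := hcond j hj
  have hlt : ∀ k ≠ j, A i k + x k < b i := fun k hkj => by
    by_cases hk : k ∈ supp z
    · calc A i k + x k ≤ A i k + z k := add_le_add_right (hle k hk) _
        _ < A i j + z j := hdom k hk hkj
        _ = b i := add_eq_of_mpMul_eq_coe_of_dominant (hzb i) hdom
    · obtain ⟨s, hs⟩ := hsep k hk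
      exact EReal.add_lt_coe_of_add_coe_sub_lt hs
        ((add_le_mpMul A x s k).trans (hxb s).le) (hx k)
  have hxj := add_eq_of_mpMul_eq_coe (hxb i) hlt
  have hzj := add_eq_of_mpMul_eq_coe_of_dominant (hzb i) hdom
  exact le_antisymm (EReal.le_of_add_le_of_add_eq_coe hxj.le hzj)
    (EReal.le_of_add_le_of_add_eq_coe hzj.le hxj)

end MaxPlus

lemma eq_of_eqOn_supp_of_ncard_le {n : ℕ} {x z : Fin n → EReal} (h : ∀ j ∈ supp z, x j = z j)
    (hcard : (supp x).ncard ≤ (supp z).ncard) : x = z := by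
  have hsub : supp z ⊆ supp x := fun j hj => show x j ≠ ⊥ by rw [h j hj]; exact hj
  have hsupp : supp z = supp x := Set.eq_of_subset_of_ncard_le hsub hcard
  funext j
  by_cases hj : j ∈ supp z
  · exact h j hj
  · have hxj : j ∉ supp x := hsupp ▸ hj
    rw [not_not.mp hj, not_not.mp hxj]

theorem stmt16_general {m n : ℕ} (A : Fin m → Fin n → EReal) (z : Fin n → EReal) (b : Fin m → ℝ)
    (hz : RmaxVec z)
    (hb : ∀ i, mpMul A z i = (b i : EReal))
    (hcond : ∀ j ∈ supp z, ∃ i : Fin m,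
      (∀ k ∈ supp z, k ≠ j → A i k + z k < A i j + z j) ∧
      (∀ l, l ∉ supp z → ∃ s : Fin m, A i l + ((b s - b i : ℝ) : EReal) < A s l)) :
    (∀ x : Fin n → EReal, RmaxVec x → (∀ i, mpMul A x i = (b i : EReal)) →
      ∀ j ∈ supp z, x j = z j) ∧
    (∀ x : Fin n → EReal, RmaxVec x → (∀ i, mpMul A x i = (b i : EReal)) →
      (∀ y : Fin n → EReal, RmaxVec y → (∀ i, mpMul A y i = (b i : EReal)) →
        (supp x).ncard ≤ (supp y).ncard) → x = z) := by
  have agree (x : Fin n → EReal) (hx : RmaxVec x) (hxb : ∀ i, mpMul A x i = b i) :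
      ∀ j ∈ supp z, x j = z j :=
    eq_on_supp_of_dominant_of_separating hx hxb hb hcond
  exact ⟨agree, fun x hx hxb hmin => eq_of_eqOn_supp_of_ncard_le (agree x hx hxb) (hmin z hz hb)⟩

/-- sparse recovery. Under conditions (a) and (b), every solution agrees
with `z` on its support, and the sparsest solution equals `z`. -/
theorem stmt16 {m n : ℕ} (A : Fin m → Fin n → EReal) (z : Fin n → EReal) (b : Fin m → ℝ)
    (hA : RmaxMat A) (hz : RmaxVec z) (hastic : DoublyAstic A)
    (hb : ∀ i, mpMul A z i = (b i : EReal))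
    (hcond : ∀ j ∈ supp z, ∃ i : Fin m,
      (∀ k ∈ supp z, k ≠ j → A i k + z k < A i j + z j) ∧
      (∀ l, l ∉ supp z → ∃ s : Fin m, A i l + ((b s - b i : ℝ) : EReal) < A s l)) :
    (∀ x : Fin n → EReal, RmaxVec x → (∀ i, mpMul A x i = (b i : EReal)) →
      ∀ j ∈ supp z, x j = z j) ∧
    (∀ x : Fin n → EReal, RmaxVec x → (∀ i, mpMul A x i = (b i : EReal)) →
      (∀ y : Fin n → EReal, RmaxVec y → (∀ i, mpMul A y i = (b i : EReal)) →
        (supp x).ncard ≤ (supp y).ncard) → x = z) :=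
  stmt16_general A z b hz hb hcond
end

section
/- Reduction from set cover: given nonempty subsets S_j ⊆ {1,…,m}, j ∈ {1,…,n}, with ∪_j S_j = {1,…,m}, define A_{ij} = 1 if i ∈ S_j and 0 otherwise, and b_i = 1 for all i. Then the principal solution of A ⊠ x = b is x̄ = (1,…,1), and the attainment sets satisfy I_j = S_j for all j; hence sparsest solutions of A ⊠ x = b correspond exactly to minimum set covers by the S_j. -/
open scoped Classical
open Finset

/-- Max-plus indicator matrix of a set system: the max-plus "one" (0) on `S j`, and the
max-plus "zero" (−∞) otherwise. -/
noncomputable def coverMat {m n : ℕ} (S : Fin n → Finset (Fin m)) : Fin m → Fin n → EReal :=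
  fun i j => if i ∈ S j then (0 : EReal) else ⊥

/-! With entries `0` on `S j` and `−∞` elsewhere, `(A ⊠ x)_i = max_{j : i ∈ S j} x_j`, which
is `> −∞` exactly when some `j ∈ supp x` has `i ∈ S j`. So supports of solutions are covers, and
every cover `K` is the support of the solution that is `1` on `K` and `−∞` off it; hence sparsest
solutions correspond to minimum covers. For the principal solution, `1 − A_{ij}` is `1` on `S j`
and `+∞` off it. -/

@[simp] lemma EReal.one_ne_bot : (1 : EReal) ≠ ⊥ := EReal.coe_ne_bot 1

@[simp] lemma EReal.one_ne_top : (1 : EReal) ≠ ⊤ := EReal.coe_ne_top 1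

namespace coverMat

variable {m n : ℕ} (S : Fin n → Finset (Fin m))

def IsCover (K : Finset (Fin n)) : Prop := ∀ i, ∃ j ∈ K, i ∈ S j

noncomputable def indicator (K : Finset (Fin n)) : Fin n → EReal :=
  fun j => if j ∈ K then 1 else ⊥

lemma coe_sub_apply (c : ℝ) (i : Fin m) (j : Fin n) :
    (c : EReal) - coverMat S i j = if i ∈ S j then (c : EReal) else ⊤ := by
  unfold coverMat
  split_ifs
  · simp
  · exact EReal.sub_bot (EReal.coe_ne_bot c)

lemma principal_const {j : Fin n} (hj : (S j).Nonempty) (c : ℝ) :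
    principal (coverMat S) (fun _ => c) j = c := by
  obtain ⟨i₀, hi₀⟩ := hj
  refine le_antisymm ((iInf_le _ i₀).trans_eq ?_) (le_iInf fun i => ?_)
  · simp [coe_sub_apply, hi₀]
  · rw [coe_sub_apply]
    split_ifs <;> simp

lemma attainment_eq {j : Fin n} (hj : (S j).Nonempty) (c : ℝ) :
    {i : Fin m | (c : EReal) - coverMat S i j = principal (coverMat S) (fun _ => c) j}
      = ↑(S j) := by
  ext i
  simp [principal_const S hj, coe_sub_apply]

lemma exists_mem_supp_of_mpMul_ne_bot {x : Fin n → EReal} {i : Fin m}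
    (h : mpMul (coverMat S) x i ≠ ⊥) : ∃ j ∈ supp x, i ∈ S j := by
  contrapose! h
  refine iSup_eq_bot.2 fun j => ?_
  by_cases hi : i ∈ S j
  · have hx : x j = ⊥ := not_not.1 fun hx => h j hx hi
    simp [hx]
  · simp [coverMat, hi]

lemma isCover_supp {x : Fin n → EReal} (hx : ∀ i, mpMul (coverMat S) x i ≠ ⊥) :
    IsCover S (supp x).toFinset := fun i => by
  simpa using exists_mem_supp_of_mpMul_ne_bot S (hx i)

lemma add_indicator_apply (K : Finset (Fin n)) (i : Fin m) (j : Fin n) :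
    coverMat S i j + indicator K j = if j ∈ K ∧ i ∈ S j then 1 else ⊥ := by
  unfold coverMat indicator
  by_cases hK : j ∈ K <;> by_cases hS : i ∈ S j <;> simp [hK, hS]

lemma supp_indicator (K : Finset (Fin n)) : supp (indicator K) = ↑K := by
  ext j
  by_cases hK : j ∈ K <;> simp [supp, indicator, hK]

lemma mpMul_indicator_eq_one_iff (K : Finset (Fin n)) (i : Fin m) :
    mpMul (coverMat S) (indicator K) i = ((1 : ℝ) : EReal) ↔ ∃ j ∈ K, i ∈ S j := by
  refine ⟨fun h => ?_, fun ⟨j, hjK, hjS⟩ => ?_⟩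
  · simpa [supp_indicator] using
      exists_mem_supp_of_mpMul_ne_bot S (x := indicator K) (by simp [h])
  · simp only [mpMul, add_indicator_apply, EReal.coe_one]
    refine le_antisymm (iSup_le fun j' => ?_) (le_iSup_of_le j ?_)
    · split_ifs <;> simp
    · simp [hjK, hjS]

lemma rmaxVec_indicator (K : Finset (Fin n)) : RmaxVec (indicator K) := fun j => by
  by_cases hK : j ∈ K <;> simp [indicator, hK]

lemma isMinCover_iff_sparsest (K : Finset (Fin n)) :
    (IsCover S K ∧ ∀ K', IsCover S K' → #K ≤ #K') ↔
      ((∀ i, mpMul (coverMat S) (indicator K) i = ((1 : ℝ) : EReal)) ∧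
        ∀ x, RmaxVec x → (∀ i, mpMul (coverMat S) x i = ((1 : ℝ) : EReal)) →
          #K ≤ (supp x).ncard) := by
  simp only [mpMul_indicator_eq_one_iff]
  refine and_congr_right fun _ => ⟨fun hmin x _ hx => ?_, fun hmin K' hK' => ?_⟩
  · rw [Set.ncard_eq_toFinset_card']
    exact hmin _ (isCover_supp S fun i => by simp [hx i])
  · simpa [supp_indicator] using
      hmin _ (rmaxVec_indicator K') ((mpMul_indicator_eq_one_iff S K' ·|>.2 (hK' _)))

end coverMat

theorem stmt18_general {m n : ℕ} (S : Fin n → Finset (Fin m)) (hS : ∀ j, (S j).Nonempty) :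
    (∀ j, principal (coverMat S) (fun _ => (1 : ℝ)) j = (1 : EReal)) ∧
    (∀ j, {i : Fin m |
        ((1 : ℝ) : EReal) - coverMat S i j = principal (coverMat S) (fun _ => (1 : ℝ)) j}
      = ↑(S j)) ∧
    (∀ K : Finset (Fin n),
      ((∀ i, ∃ j ∈ K, i ∈ S j) ∧
        ∀ K' : Finset (Fin n), (∀ i, ∃ j ∈ K', i ∈ S j) → K.card ≤ K'.card) ↔
      ((∀ i, mpMul (coverMat S) (fun j => if j ∈ K then (1 : EReal) else ⊥) i
          = ((1 : ℝ) : EReal)) ∧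
        ∀ x : Fin n → EReal, RmaxVec x →
          (∀ i, mpMul (coverMat S) x i = ((1 : ℝ) : EReal)) →
          K.card ≤ (supp x).ncard)) :=
  ⟨fun j => by simpa using coverMat.principal_const S (hS j) 1,
    fun j => coverMat.attainment_eq S (hS j) 1,
    coverMat.isMinCover_iff_sparsest S⟩

/-- reduction from minimum set cover: `x̄ = (1,…,1)`, `I_j = S_j`, and
sparsest solutions correspond exactly to minimum set covers. -/
theorem stmt18 {m n : ℕ} (S : Fin n → Finset (Fin m)) (hS : ∀ j, (S j).Nonempty)
    (hcov : ∀ i, ∃ j, i ∈ S j) :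
    (∀ j, principal (coverMat S) (fun _ => (1 : ℝ)) j = (1 : EReal)) ∧
    (∀ j, {i : Fin m |
        ((1 : ℝ) : EReal) - coverMat S i j = principal (coverMat S) (fun _ => (1 : ℝ)) j}
      = ↑(S j)) ∧
    (∀ K : Finset (Fin n),
      ((∀ i, ∃ j ∈ K, i ∈ S j) ∧
        ∀ K' : Finset (Fin n), (∀ i, ∃ j ∈ K', i ∈ S j) → K.card ≤ K'.card) ↔
      ((∀ i, mpMul (coverMat S) (fun j => if j ∈ K then (1 : EReal) else ⊥) i
          = ((1 : ℝ) : EReal)) ∧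
        ∀ x : Fin n → EReal, RmaxVec x →
          (∀ i, mpMul (coverMat S) x i = ((1 : ℝ) : EReal)) →
          K.card ≤ (supp x).ncard)) :=
  stmt18_general S hS
end

section
/- If x ∈ ℝ_max^n is any solution of A ⊠ x = b and x̂ is defined by x̂_j = x_j for j ∈ J_x (the agreement set with the principal solution) and x̂_j = −∞ otherwise, then x̂ is also a solution of A ⊠ x = b and supp(x̂) = J_x ⊆ supp(x). -/
open scoped Classical
open Finset

/-!
A solution `x` satisfies `A i j + x j ≤ b i` for all `i, j`, which by residuation is `x ≤ x̄`.
In each row `i` the maximum `b i` is attained at some `j`, and there `A i j + x j = b i` forces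
`x j ≥ b i - A i j ≥ x̄ j`, so `j ∈ J_x`: the agreement set covers every row. Lowering the
coordinates outside `J_x` to `⊥` can only decrease `A ⊠ x`, yet keeps an attaining term in
every row, so the restricted vector is still a solution. Since `A` has no `+∞` entries, `x̄` is
nowhere `⊥`, which gives `J_x ⊆ supp x`.
-/

theorem EReal.coe_sub_ne_bot {r : ℝ} {a : EReal} (ha : a ≠ ⊤) : (r : EReal) - a ≠ ⊥ := by
  simp [sub_eq_add_neg, EReal.add_eq_bot_iff, ha]

section MaxPlus

variable {m n : ℕ} (A : Fin m → Fin n → EReal)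

theorem mpMul_mono_s19 {x y : Fin n → EReal} (hxy : x ≤ y) : mpMul A x ≤ mpMul A y :=
  fun i => iSup_mono fun j => add_le_add_right (hxy j) (A i j)

theorem add_le_of_mpMul_le {x : Fin n → EReal} {c : Fin m → EReal} (h : mpMul A x ≤ c)
    (i : Fin m) (j : Fin n) : A i j + x j ≤ c i :=
  (le_iSup (fun j => A i j + x j) j).trans (h i)

theorem exists_add_eq_of_mpMul_eq {x : Fin n → EReal} {i : Fin m} {c : EReal}
    (h : mpMul A x i = c) (hc : c ≠ ⊥) : ∃ j, A i j + x j = c := by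
  have : Nonempty (Fin n) := by
    by_contra hn
    rw [not_nonempty_iff] at hn
    exact hc (h ▸ iSup_of_empty _)
  obtain ⟨j, hj⟩ := exists_eq_ciSup_of_finite (f := fun j => A i j + x j)
  exact ⟨j, hj.trans h⟩

theorem mpMul_ite_eq_of_covers {x : Fin n → EReal} {c : Fin m → EReal}
    (p : Fin n → Prop) [DecidablePred p] (hsol : mpMul A x = c)
    (hcover : ∀ i, ∃ j, p j ∧ A i j + x j = c i) (i : Fin m) :
    mpMul A (fun j => if p j then x j else ⊥) i = c i := by
  obtain ⟨j, hpj, hj⟩ := hcover i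
  refine le_antisymm ?_ ?_
  · refine hsol ▸ mpMul_mono_s19 A (fun k => ?_) i
    split_ifs <;> simp
  · calc c i = A i j + (if p j then x j else ⊥) := by rw [if_pos hpj, hj]
      _ ≤ mpMul A (fun j => if p j then x j else ⊥) i :=
        le_iSup (fun k => A i k + (if p k then x k else ⊥)) j

theorem supp_ite (p : Fin n → Prop) [DecidablePred p] (x : Fin n → EReal) :
    supp (fun j => if p j then x j else ⊥) = {j | p j} ∩ supp x := by
  ext j
  by_cases hj : p j <;> simp [supp, hj]

variable (b : Fin m → ℝ)

theorem le_principal_of_mpMul_le {x : Fin n → EReal} (h : mpMul A x ≤ fun i => (b i : EReal))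
    (j : Fin n) : x j ≤ principal A b j :=
  le_iInf fun i =>
    (EReal.le_sub_iff_add_le (Or.inr (EReal.coe_ne_bot _)) (Or.inr (EReal.coe_ne_top _))).2
      (add_comm (A i j) (x j) ▸ add_le_of_mpMul_le A h i j)

theorem principal_le_of_add_eq {x : Fin n → EReal} {i : Fin m} {j : Fin n}
    (h : A i j + x j = b i) : principal A b j ≤ x j := by
  have hA : A i j ≠ ⊥ := fun h' => EReal.coe_ne_bot (b i) (by simp [← h, h'])
  have hx : x j ≠ ⊥ := fun h' => EReal.coe_ne_bot (b i) (by simp [← h, h'])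
  refine (iInf_le _ i).trans ?_
  rw [EReal.sub_le_iff_le_add (Or.inl hA) (Or.inr hx), add_comm, h]

theorem principal_ne_bot (hA : RmaxMat A) (j : Fin n) : principal A b j ≠ ⊥ := by
  rcases isEmpty_or_nonempty (Fin m) with hm | hm
  · simp [principal, iInf_of_empty]
  · obtain ⟨i, hi⟩ := exists_eq_ciInf_of_finite (f := fun i => (b i : EReal) - A i j)
    rw [principal, ← hi]
    exact EReal.coe_sub_ne_bot (hA i j)

end MaxPlus

theorem stmt19_general {m n : ℕ} (A : Fin m → Fin n → EReal) (b : Fin m → ℝ)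
    (hA : RmaxMat A)
    (x : Fin n → EReal)
    (hsol : ∀ i, mpMul A x i = (b i : EReal)) :
    (∀ i, mpMul A (fun j => if x j = principal A b j then x j else ⊥) i = (b i : EReal)) ∧
    supp (fun j => if x j = principal A b j then x j else ⊥)
      = {j : Fin n | x j = principal A b j} ∧
    {j : Fin n | x j = principal A b j} ⊆ supp x := by
  have hsol' : mpMul A x = fun i => (b i : EReal) := funext hsol
  have hJ : {j : Fin n | x j = principal A b j} ⊆ supp x := fun j hj =>
    show x j ≠ ⊥ from (hj : x j = _) ▸ principal_ne_bot A b hA j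
  have hcover : ∀ i, ∃ j, x j = principal A b j ∧ A i j + x j = b i := fun i => by
    obtain ⟨j, hj⟩ := exists_add_eq_of_mpMul_eq A (hsol i) (EReal.coe_ne_bot _)
    exact ⟨j, le_antisymm (le_principal_of_mpMul_le A b hsol'.le j)
      (principal_le_of_add_eq A b hj), hj⟩
  exact ⟨mpMul_ite_eq_of_covers A _ hsol' hcover, by rw [supp_ite, Set.inter_eq_left.2 hJ], hJ⟩

/-- restricting a solution to its agreement set yields a (sparser) solution. -/
theorem stmt19 {m n : ℕ} (A : Fin m → Fin n → EReal) (b : Fin m → ℝ)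
    (hA : RmaxMat A) (hastic : DoublyAstic A)
    (x : Fin n → EReal) (hx : RmaxVec x)
    (hsol : ∀ i, mpMul A x i = (b i : EReal)) :
    (∀ i, mpMul A (fun j => if x j = principal A b j then x j else ⊥) i = (b i : EReal)) ∧
    supp (fun j => if x j = principal A b j then x j else ⊥)
      = {j : Fin n | x j = principal A b j} ∧
    {j : Fin n | x j = principal A b j} ⊆ supp x :=
  stmt19_general A b hA x hsol
end
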